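/- arXiv:2202.02279 — 6 statements merged into one kernel-verified Lean document; each statement's English description precedes it below -/
import Mathlib

section
/- The unique minimizer of (1/2)||B - B_k||_F^2 over all J-symmetric matrices B satisfying the secant condition B s = y (for a nonzero vector s) is given by B_{k+1} = B_k + (J s (y - B_k s)^T J)/(s^T s) + ((y - B_k s) s^T)/(s^T s) - ((J s)^T (y - B_k s))(J s s^T)/((s^T s)^2), assuming B_k is J-symmetric. -/
open Matrix

/-- `J = diag(I_n, -I_m)` as a block matrix. -/
noncomputable def Jmat (n m : ℕ) : Matrix (Fin n ⊕ Fin m) (Fin n ⊕ Fin m) ℝ :=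
  Matrix.fromBlocks 1 0 0 (-1)

/-- `M` is J-symmetric: block form `[[D, Aᵀ],[-A, C]]` with `D`, `C` symmetric. -/
def IsJSymm (n m : ℕ) (M : Matrix (Fin n ⊕ Fin m) (Fin n ⊕ Fin m) ℝ) : Prop :=
  ∃ (D : Matrix (Fin n) (Fin n) ℝ) (A : Matrix (Fin m) (Fin n) ℝ)
    (C : Matrix (Fin m) (Fin m) ℝ),
    Dᵀ = D ∧ Cᵀ = C ∧ M = Matrix.fromBlocks D Aᵀ (-A) C

/-- Frobenius norm of a real matrix. -/
noncomputable def frobNorm {ι κ : Type*} [Fintype ι] [Fintype κ] (M : Matrix ι κ ℝ) : ℝ :=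
  Real.sqrt (∑ i, ∑ j, (M i j) ^ 2)

/-- The `J`-symmetric quasi-Newton update
`B_{k+1} = B_k + (Js r^T J)/(sᵀs) + (r sᵀ)/(sᵀs) - ((Js)ᵀ r) (Js sᵀ)/(sᵀs)²`,
where `r = y - B_k s`.  (Note `rᵀJ = (Jr)ᵀ` since `J` is symmetric.) -/
noncomputable def JsymmUpdate (n m : ℕ)
    (Bk : Matrix (Fin n ⊕ Fin m) (Fin n ⊕ Fin m) ℝ)
    (s y : (Fin n ⊕ Fin m) → ℝ) : Matrix (Fin n ⊕ Fin m) (Fin n ⊕ Fin m) ℝ :=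
  let J := Jmat n m
  let r := y - Bk.mulVec s
  Bk + (s ⬝ᵥ s)⁻¹ • (Matrix.vecMulVec (J.mulVec s) (J.mulVec r)
      + Matrix.vecMulVec r s)
    - (((J.mulVec s) ⬝ᵥ r) / (s ⬝ᵥ s) ^ 2) • Matrix.vecMulVec (J.mulVec s) s

def eps (n m : ℕ) : (Fin n ⊕ Fin m) → ℝ := Sum.elim (fun _ => 1) (fun _ => -1)

lemma eps_sq (n m : ℕ) (i : Fin n ⊕ Fin m) : eps n m i * eps n m i = 1 := by
  cases i <;> simp [eps]

lemma Jmat_eq (n m : ℕ) : Jmat n m = Matrix.diagonal (eps n m) := by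
  have : Jmat n m = Matrix.fromBlocks (Matrix.diagonal (fun _ => (1:ℝ))) 0 0
      (Matrix.diagonal (fun _ => (-1:ℝ))) := by
    simp [Jmat, Matrix.diagonal_one]
    ext i j
    simp [Matrix.diagonal, Matrix.one_apply]
    split <;> simp
  rw [this, Matrix.fromBlocks_diagonal]
  rfl

lemma Jmat_mulVec (n m : ℕ) (v : (Fin n ⊕ Fin m) → ℝ) :
    (Jmat n m).mulVec v = fun i => eps n m i * v i := by
  funext i
  rw [Jmat_eq, Matrix.mulVec_diagonal]

/-- pointwise characterisation of J-symmetry -/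
def JSymmPt (n m : ℕ) (M : Matrix (Fin n ⊕ Fin m) (Fin n ⊕ Fin m) ℝ) : Prop :=
  ∀ i j, eps n m i * M i j = eps n m j * M j i

lemma isJSymm_iff (n m : ℕ) (M : Matrix (Fin n ⊕ Fin m) (Fin n ⊕ Fin m) ℝ) :
    IsJSymm n m M ↔ JSymmPt n m M := by
  constructor
  · rintro ⟨D, A, C, hD, hC, rfl⟩ i j
    have hD' : ∀ a b, D a b = D b a := fun a b => congrFun (congrFun hD b) a
    have hC' : ∀ a b, C a b = C b a := fun a b => congrFun (congrFun hC b) a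
    cases i <;> cases j <;>
      simp [eps, Matrix.fromBlocks, Matrix.transpose_apply] <;>
      first
        | exact hD' _ _
        | exact hC' _ _
  · intro h
    refine ⟨M.toBlocks₁₁, -(M.toBlocks₂₁), M.toBlocks₂₂, ?_, ?_, ?_⟩
    · ext a b
      have := h (Sum.inl b) (Sum.inl a)
      simpa [eps, Matrix.toBlocks₁₁] using this
    · ext a b
      have := h (Sum.inr b) (Sum.inr a)
      simp [eps] at this
      simp [Matrix.toBlocks₂₂]
      linarith
    · ext i j
      cases i with
      | inl a =>
        cases j with
        | inl b => simp [Matrix.fromBlocks, Matrix.toBlocks₁₁]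
        | inr b =>
          have := h (Sum.inl a) (Sum.inr b)
          simp [eps] at this
          simp [Matrix.fromBlocks, Matrix.toBlocks₂₁, this]
      | inr a =>
        cases j with
        | inl b => simp [Matrix.fromBlocks, Matrix.toBlocks₂₁]
        | inr b => simp [Matrix.fromBlocks, Matrix.toBlocks₂₂]

section Frob
variable {ι κ : Type*} [Fintype ι] [Fintype κ]

noncomputable def finner (M N : Matrix ι κ ℝ) : ℝ := ∑ i, ∑ j, M i j * N i j

lemma frobNorm_sq (M : Matrix ι κ ℝ) : frobNorm M ^ 2 = ∑ i, ∑ j, (M i j) ^ 2 := by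
  rw [frobNorm, Real.sq_sqrt]
  positivity

lemma frobSq_add (M N : Matrix ι κ ℝ) :
    ∑ i, ∑ j, ((M + N) i j) ^ 2
      = (∑ i, ∑ j, (M i j) ^ 2) + 2 * finner M N + ∑ i, ∑ j, (N i j) ^ 2 := by
  simp only [finner, Matrix.add_apply, Finset.mul_sum, ← Finset.sum_add_distrib]
  apply Finset.sum_congr rfl
  intro i _
  apply Finset.sum_congr rfl
  intro j _
  ring

lemma frobSq_pos (M : Matrix ι κ ℝ) (hM : M ≠ 0) : 0 < ∑ i, ∑ j, (M i j) ^ 2 := by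
  rcases lt_or_eq_of_le (by positivity : (0:ℝ) ≤ ∑ i, ∑ j, (M i j) ^ 2) with h | h
  · exact h
  · exfalso
    apply hM
    ext i j
    have h1 := (Finset.sum_eq_zero_iff_of_nonneg (fun i _ => by positivity)).mp h.symm i
      (Finset.mem_univ i)
    have h2 := (Finset.sum_eq_zero_iff_of_nonneg (fun j _ => by positivity)).mp h1 j
      (Finset.mem_univ j)
    simpa using pow_eq_zero_iff (n := 2) (by norm_num) |>.mp h2

end Frob

lemma finner_vecMulVec {ι : Type*} [Fintype ι] (a b : ι → ℝ) (W : Matrix ι ι ℝ) :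
    finner (Matrix.vecMulVec a b) W = ∑ i, ∑ j, a i * b j * W i j := by
  simp [finner, Matrix.vecMulVec_apply]

lemma finner_add_left {ι : Type*} [Fintype ι] (M N W : Matrix ι ι ℝ) :
    finner (M + N) W = finner M W + finner N W := by
  simp [finner, Matrix.add_apply, add_mul, Finset.sum_add_distrib]

lemma finner_sub_left {ι : Type*} [Fintype ι] (M N W : Matrix ι ι ℝ) :
    finner (M - N) W = finner M W - finner N W := by
  simp [finner, Matrix.sub_apply, sub_mul, Finset.sum_sub_distrib]

lemma finner_smul_left {ι : Type*} [Fintype ι] (c : ℝ) (M W : Matrix ι ι ℝ) :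
    finner (c • M) W = c * finner M W := by
  simp [finner, Matrix.smul_apply, smul_eq_mul, mul_assoc, Finset.mul_sum]

lemma swap_entry {n m : ℕ} {W : Matrix (Fin n ⊕ Fin m) (Fin n ⊕ Fin m) ℝ}
    (hW : JSymmPt n m W) (i j : Fin n ⊕ Fin m) :
    eps n m i * eps n m j * W i j = W j i := by
  linear_combination eps n m j * hW i j + W j i * eps_sq n m j

lemma vecMulVec_mulVec' {ι : Type*} [Fintype ι] (a b v : ι → ℝ) :
    (Matrix.vecMulVec a b).mulVec v = (b ⬝ᵥ v) • a := by
  funext i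
  simp only [Matrix.mulVec, dotProduct, Matrix.vecMulVec_apply, Pi.smul_apply,
    smul_eq_mul, Finset.sum_mul]
  exact Finset.sum_congr rfl (fun j _ => by ring)

section Orth
variable {n m : ℕ} (s r : (Fin n ⊕ Fin m) → ℝ) {W : Matrix (Fin n ⊕ Fin m) (Fin n ⊕ Fin m) ℝ}

lemma orth2 (hWs : W.mulVec s = 0) (r : (Fin n ⊕ Fin m) → ℝ) :
    ∑ i, ∑ j, r i * s j * W i j = 0 := by
  have key : ∀ i, ∑ j, r i * s j * W i j = r i * (W.mulVec s i) := by
    intro i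
    simp only [Matrix.mulVec, dotProduct, Finset.mul_sum]
    exact Finset.sum_congr rfl (fun j _ => by ring)
  rw [Finset.sum_congr rfl (fun i _ => key i)]
  simp only [hWs, Pi.zero_apply, mul_zero, Finset.sum_const_zero]

lemma orth1 (hW : JSymmPt n m W) (hWs : W.mulVec s = 0) (r : (Fin n ⊕ Fin m) → ℝ) :
    ∑ i, ∑ j, (eps n m i * s i) * (eps n m j * r j) * W i j = 0 := by
  have step : ∀ i j, (eps n m i * s i) * (eps n m j * r j) * W i j = r j * (W j i * s i) := by
    intro i j
    linear_combination (s i * r j) * swap_entry hW i j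
  rw [Finset.sum_congr rfl (fun i _ => Finset.sum_congr rfl (fun j _ => step i j)),
    Finset.sum_comm]
  have key : ∀ j, ∑ i, r j * (W j i * s i) = r j * (W.mulVec s j) := by
    intro j
    simp only [Matrix.mulVec, dotProduct, Finset.mul_sum]
  rw [Finset.sum_congr rfl (fun j _ => key j)]
  simp only [hWs, Pi.zero_apply, mul_zero, Finset.sum_const_zero]

lemma orth3 (hW : JSymmPt n m W) (hWs : W.mulVec s = 0) :
    ∑ i, ∑ j, (eps n m i * s i) * s j * W i j = 0 := by
  have step : ∀ i j, (eps n m i * s i) * s j * W i j = (eps n m j * s j) * (W j i * s i) := by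
    intro i j
    linear_combination (s i * s j) * hW i j
  rw [Finset.sum_congr rfl (fun i _ => Finset.sum_congr rfl (fun j _ => step i j)),
    Finset.sum_comm]
  have key : ∀ j, ∑ i, (eps n m j * s j) * (W j i * s i) = (eps n m j * s j) * (W.mulVec s j) := by
    intro j
    simp only [Matrix.mulVec, dotProduct, Finset.mul_sum]
  rw [Finset.sum_congr rfl (fun j _ => key j)]
  simp only [hWs, Pi.zero_apply, mul_zero, Finset.sum_const_zero]

end Orth

/-- The J-symmetric (PSB-like) update is the unique minimizer of
`(1/2)‖B - B_k‖_F²` over J-symmetric matrices `B` with `B s = y`. -/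
theorem stmt_2 (n m : ℕ) (Bk : Matrix (Fin n ⊕ Fin m) (Fin n ⊕ Fin m) ℝ)
    (s y : (Fin n ⊕ Fin m) → ℝ) (hs : s ≠ 0) (hBk : IsJSymm n m Bk) :
    IsJSymm n m (JsymmUpdate n m Bk s y) ∧
    (JsymmUpdate n m Bk s y).mulVec s = y ∧
    ∀ B : Matrix (Fin n ⊕ Fin m) (Fin n ⊕ Fin m) ℝ,
      IsJSymm n m B → B.mulVec s = y → B ≠ JsymmUpdate n m Bk s y →
      (1/2) * frobNorm (JsymmUpdate n m Bk s y - Bk) ^ 2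
        < (1/2) * frobNorm (B - Bk) ^ 2 := by
  classical
  have hne : s ⬝ᵥ s ≠ 0 := fun h => hs (dotProduct_self_eq_zero.mp h)
  set r : (Fin n ⊕ Fin m) → ℝ := y - Bk.mulVec s with hr
  set α : ℝ := (s ⬝ᵥ s)⁻¹ with hα
  set β : ℝ := ((fun i => eps n m i * s i) ⬝ᵥ r) / (s ⬝ᵥ s) ^ 2 with hβ
  set Δ : Matrix (Fin n ⊕ Fin m) (Fin n ⊕ Fin m) ℝ :=
    α • (Matrix.vecMulVec (fun i => eps n m i * s i) (fun i => eps n m i * r i)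
        + Matrix.vecMulVec r s)
      - β • Matrix.vecMulVec (fun i => eps n m i * s i) s with hΔ
  have hupd : JsymmUpdate n m Bk s y = Bk + Δ := by
    rw [hΔ]
    unfold JsymmUpdate
    simp only [Jmat_mulVec, ← hr, ← hα, ← hβ]
    rw [add_sub_assoc]
  have hΔs : Δ.mulVec s = r := by
    rw [hΔ]
    rw [Matrix.sub_mulVec, Matrix.smul_mulVec, Matrix.smul_mulVec,
      Matrix.add_mulVec, vecMulVec_mulVec', vecMulVec_mulVec', vecMulVec_mulVec']
    have hws : (fun i => eps n m i * r i) ⬝ᵥ s = (fun i => eps n m i * s i) ⬝ᵥ r := by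
      simp only [dotProduct]
      exact Finset.sum_congr rfl (fun j _ => by ring)
    funext i
    simp only [Pi.sub_apply, Pi.smul_apply, Pi.add_apply, smul_eq_mul, hws]
    rw [hα, hβ]
    field_simp
    ring
  have hΔpt : JSymmPt n m Δ := by
    intro i j
    rw [hΔ]
    simp only [Matrix.sub_apply, Matrix.add_apply, Matrix.smul_apply,
      Matrix.vecMulVec_apply, smul_eq_mul]
    cases i <;> cases j <;> simp [eps] <;> ring
  have hBkpt : JSymmPt n m Bk := (isJSymm_iff n m Bk).mp hBk
  have hupdpt : JSymmPt n m (Bk + Δ) := by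
    intro i j
    simp only [Matrix.add_apply, mul_add, hBkpt i j, hΔpt i j]
  have hsecant : (JsymmUpdate n m Bk s y).mulVec s = y := by
    rw [hupd, Matrix.add_mulVec, hΔs, hr]
    funext i
    simp
  refine ⟨(isJSymm_iff n m _).mpr (hupd ▸ hupdpt), hsecant, ?_⟩
  intro B hB hBs hBne
  rw [hupd] at hBne ⊢
  set W : Matrix (Fin n ⊕ Fin m) (Fin n ⊕ Fin m) ℝ := B - (Bk + Δ) with hWdef
  have hWpt : JSymmPt n m W := by
    intro i j
    have h1 := (isJSymm_iff n m B).mp hB i j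
    have h2 := hBkpt i j
    have h3 := hΔpt i j
    rw [hWdef]
    simp only [Matrix.sub_apply, Matrix.add_apply]
    linear_combination h1 - h2 - h3
  have hWs : W.mulVec s = 0 := by
    rw [hWdef, Matrix.sub_mulVec, Matrix.add_mulVec, hΔs, hBs, hr]
    funext i
    simp
  have hWne : W ≠ 0 := sub_ne_zero.mpr hBne
  have hdecomp : B - Bk = Δ + W := by rw [hWdef]; abel
  have horth : finner Δ W = 0 := by
    rw [hΔ, finner_sub_left, finner_smul_left, finner_smul_left, finner_add_left,
      finner_vecMulVec, finner_vecMulVec, finner_vecMulVec,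
      orth1 s hWpt hWs r, orth2 s hWs r, orth3 s hWpt hWs]
    ring
  have e1 : frobNorm (Bk + Δ - Bk) ^ 2 = ∑ i, ∑ j, (Δ i j) ^ 2 := by
    have h : Bk + Δ - Bk = Δ := by abel
    rw [h, frobNorm_sq]
  have e2 : frobNorm (B - Bk) ^ 2
      = (∑ i, ∑ j, (Δ i j) ^ 2) + 2 * finner Δ W + ∑ i, ∑ j, (W i j) ^ 2 := by
    rw [frobNorm_sq, hdecomp, ← frobSq_add]
  have hpos : 0 < ∑ i, ∑ j, (W i j) ^ 2 := frobSq_pos W hWne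
  rw [e1, e2, horth]
  linarith
end

section
/- For a nonzero vector s ∈ R^{n+m}, the matrix B_{k+1} defined by the J-symmetric update B_{k+1} = B_k + (J s r^T J + r s^T)/(s^T s) - ((J s)^T r)(J s s^T)/((s^T s)^2) with r = y - B_k s is J-symmetric whenever B_k is J-symmetric, and satisfies the secant condition B_{k+1} s = y. -/
open Matrix

/-! Since `J` is a symmetric involution, `J M = Mᵀ J` says exactly that `J M` is symmetric, and
multiplying the update by `J` turns its rank-one corrections into the symmetric matrices
`s (Jr)ᵀ + (Jr) sᵀ` and `s sᵀ`. For the secant condition, `(Jr)ᵀ s = (Js)ᵀ r`, so the two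
multiples of `Js` in `B_{k+1} s` cancel and what is left is `B_k s + r = y`. -/

namespace Matrix

variable {ι α : Type*} [CommSemiring α]

theorem isSymm_vecMulVec_add_vecMulVec (u v : ι → α) :
    (vecMulVec u v + vecMulVec v u).IsSymm := by
  simpa only [transpose_vecMulVec] using isSymm_add_transpose_self (vecMulVec u v)

theorem isSymm_vecMulVec_self (u : ι → α) : (vecMulVec u u).IsSymm :=
  transpose_vecMulVec u u

variable [Fintype ι]

theorem mul_eq_transpose_mul_iff_isSymm {J M : Matrix ι ι α} (hJ : J.IsSymm) :
    J * M = Mᵀ * J ↔ (J * M).IsSymm := by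
  rw [IsSymm, transpose_mul, hJ.eq, eq_comm]

theorem IsSymm.dotProduct_mulVec_comm {J : Matrix ι ι α} (hJ : J.IsSymm) (u v : ι → α) :
    J *ᵥ u ⬝ᵥ v = J *ᵥ v ⬝ᵥ u := by
  rw [dotProduct_comm, dotProduct_mulVec, ← mulVec_transpose, hJ.eq]

end Matrix

theorem Jmat_isSymm (n m : ℕ) : (Jmat n m).IsSymm :=
  IsSymm.fromBlocks isSymm_one (by simp) (isSymm_one.neg)

theorem Jmat_mul_self (n m : ℕ) : Jmat n m * Jmat n m = 1 := by
  simp [Jmat, fromBlocks_multiply, ← fromBlocks_one]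

theorem Jmat_mulVec_Jmat_mulVec (n m : ℕ) (v : Fin n ⊕ Fin m → ℝ) :
    Jmat n m *ᵥ (Jmat n m *ᵥ v) = v := by
  rw [mulVec_mulVec, Jmat_mul_self, one_mulVec]

theorem Jmat_mul_JsymmUpdate (n m : ℕ) (Bk : Matrix (Fin n ⊕ Fin m) (Fin n ⊕ Fin m) ℝ)
    (s y : Fin n ⊕ Fin m → ℝ) :
    Jmat n m * JsymmUpdate n m Bk s y =
      Jmat n m * Bk
        + (s ⬝ᵥ s)⁻¹ • (vecMulVec s (Jmat n m *ᵥ (y - Bk *ᵥ s))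
          + vecMulVec (Jmat n m *ᵥ (y - Bk *ᵥ s)) s)
        - ((Jmat n m *ᵥ s ⬝ᵥ (y - Bk *ᵥ s)) / (s ⬝ᵥ s) ^ 2) • vecMulVec s s := by
  simp only [JsymmUpdate, Matrix.mul_sub, Matrix.mul_add, Matrix.mul_smul, mul_vecMulVec,
    Jmat_mulVec_Jmat_mulVec]

theorem JsymmUpdate_mulVec_self (n m : ℕ) (Bk : Matrix (Fin n ⊕ Fin m) (Fin n ⊕ Fin m) ℝ)
    {s : Fin n ⊕ Fin m → ℝ} (hs : s ≠ 0) (y : Fin n ⊕ Fin m → ℝ) :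
    JsymmUpdate n m Bk s y *ᵥ s = y := by
  have hss : s ⬝ᵥ s ≠ 0 := dotProduct_self_eq_zero.not.mpr hs
  simp only [JsymmUpdate, sub_mulVec, add_mulVec, smul_mulVec, vecMulVec_mulVec,
    (Jmat_isSymm n m).dotProduct_mulVec_comm (y - Bk *ᵥ s) s, op_smul_eq_smul, smul_add,
    smul_smul]
  have hcoeff (c : ℝ) : c / (s ⬝ᵥ s) ^ 2 * (s ⬝ᵥ s) = (s ⬝ᵥ s)⁻¹ * c := by field_simp
  rw [inv_mul_cancel₀ hss, one_smul, hcoeff]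
  abel

/-- The J-symmetric update preserves J-symmetry (`J M = Mᵀ J`) and
satisfies the secant condition. -/
theorem stmt_3 (n m : ℕ) (Bk : Matrix (Fin n ⊕ Fin m) (Fin n ⊕ Fin m) ℝ)
    (s y : (Fin n ⊕ Fin m) → ℝ) (hs : s ≠ 0)
    (hBk : Jmat n m * Bk = Bkᵀ * Jmat n m) :
    (Jmat n m * JsymmUpdate n m Bk s y
        = (JsymmUpdate n m Bk s y)ᵀ * Jmat n m) ∧
    (JsymmUpdate n m Bk s y).mulVec s = y := by
  refine ⟨?_, JsymmUpdate_mulVec_self n m Bk hs y⟩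
  rw [mul_eq_transpose_mul_iff_isSymm (Jmat_isSymm n m)] at hBk ⊢
  rw [Jmat_mul_JsymmUpdate]
  exact (hBk.add ((isSymm_vecMulVec_add_vecMulVec _ _).smul _)).sub
    ((isSymm_vecMulVec_self s).smul _)
end

section
/- Let s ≠ 0, P = I - (s s^T)/(s^T s), and J = diag(I_n, -I_m). Then the J-symmetric update B_{k+1} = B_k + (J s r^T J + r s^T)/(s^T s) - ((J s)^T r)(J s s^T)/((s^T s)^2) with r = y - B_k s, for J-symmetric B_k, can be equivalently written as B_{k+1} = J P J B_k P + (y s^T)/(s^T s) + (J s y^T J)/(s^T s) P. -/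
/-!
Put `u = J s` and `t = (sᵀs)⁻¹`. As `J` is a symmetric involution, `J P J = I - t u uᵀ`, and the
`J`-symmetry `J B = Bᵀ J` gives `J B s = Bᵀ u`, so the term `J s rᵀ J` of the update equals
`u (J y)ᵀ - u uᵀ B`. After these two substitutions both sides expand to the same polynomial of
degree two in `t`.
-/

open Matrix

theorem Matrix.mul_vecMulVec_mul {l m n o R : Type*} [Fintype m] [Fintype n] [CommSemiring R]
    (M : Matrix l m R) (a : m → R) (b : n → R) (N : Matrix n o R) :
    M * vecMulVec a b * N = vecMulVec (M *ᵥ a) (Nᵀ *ᵥ b) := by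
  rw [mul_vecMulVec, vecMulVec_mul, ← mulVec_transpose]

theorem Matrix.mulVec_mulVec_eq_vecMul_of_mul_eq_transpose_mul {n R : Type*} [Fintype n]
    [CommSemiring R] {J B : Matrix n n R} (hB : J * B = Bᵀ * J) (s : n → R) :
    J *ᵥ (B *ᵥ s) = (J *ᵥ s) ᵥ* B := by
  rw [mulVec_mulVec, hB, ← mulVec_mulVec, mulVec_transpose]

theorem Matrix.jSymmetric_update_eq {ι R : Type*} [Fintype ι] [DecidableEq ι] [CommRing R]
    {J B : Matrix ι ι R} (hJ : Jᵀ = J) (hJJ : J * J = 1) (hB : J * B = Bᵀ * J)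
    (s y : ι → R) (t : R) :
    B + t • (vecMulVec (J *ᵥ s) (J *ᵥ (y - B *ᵥ s)) + vecMulVec (y - B *ᵥ s) s)
        - (((J *ᵥ s) ⬝ᵥ (y - B *ᵥ s)) * t ^ 2) • vecMulVec (J *ᵥ s) s
      = J * (1 - t • vecMulVec s s) * J * B * (1 - t • vecMulVec s s) + t • vecMulVec y s
        + t • (J * vecMulVec s y * J * (1 - t • vecMulVec s s)) := by
  have hJPJ : J * (1 - t • vecMulVec s s) * J = 1 - t • vecMulVec (J *ᵥ s) (J *ᵥ s) := by
    rw [mul_sub, sub_mul, mul_one, hJJ, mul_smul_comm, smul_mul_assoc, mul_vecMulVec_mul, hJ]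
  have hdot : (J *ᵥ y) ⬝ᵥ s = (J *ᵥ s) ⬝ᵥ y := by
    rw [dotProduct_comm, dotProduct_mulVec, ← mulVec_transpose, hJ]
  rw [hJPJ, mul_vecMulVec_mul, hJ, mulVec_sub, mulVec_mulVec_eq_vecMul_of_mul_eq_transpose_mul hB]
  simp only [mul_sub, sub_mul, mul_one, one_mul, mul_smul_comm, smul_mul_assoc, vecMulVec_sub,
    sub_vecMulVec, mul_vecMulVec, vecMulVec_mul, vecMulVec_mulVec, op_smul_eq_smul,
    smul_vecMulVec, dotProduct_sub, ← dotProduct_mulVec, hdot, smul_sub, smul_add]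
  match_scalars <;> ring

theorem Jmat_transpose (n m : ℕ) : (Jmat n m)ᵀ = Jmat n m := by
  simp [Jmat, fromBlocks_transpose]

theorem stmt_5_general (n m : ℕ) (Bk : Matrix (Fin n ⊕ Fin m) (Fin n ⊕ Fin m) ℝ)
    (s y : (Fin n ⊕ Fin m) → ℝ)
    (hBk : Jmat n m * Bk = Bkᵀ * Jmat n m) :
    let J := Jmat n m
    let P : Matrix (Fin n ⊕ Fin m) (Fin n ⊕ Fin m) ℝ :=
      1 - (s ⬝ᵥ s)⁻¹ • Matrix.vecMulVec s s
    JsymmUpdate n m Bk s y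
      = J * P * J * Bk * P + (s ⬝ᵥ s)⁻¹ • Matrix.vecMulVec y s
        + (s ⬝ᵥ s)⁻¹ • (J * Matrix.vecMulVec s y * J * P) := by
  intro J P
  rw [JsymmUpdate, div_eq_mul_inv, ← inv_pow]
  exact jSymmetric_update_eq (Jmat_transpose n m) (Jmat_mul_self n m) hBk s y (s ⬝ᵥ s)⁻¹

/-- Equivalent form of the J-symmetric update:
`B_{k+1} = J P J B_k P + (y sᵀ)/(sᵀs) + (J s yᵀ J)/(sᵀs) P`
where `P = I - s sᵀ/(sᵀ s)`. -/
theorem stmt_5 (n m : ℕ) (Bk : Matrix (Fin n ⊕ Fin m) (Fin n ⊕ Fin m) ℝ)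
    (s y : (Fin n ⊕ Fin m) → ℝ) (hs : s ≠ 0)
    (hBk : Jmat n m * Bk = Bkᵀ * Jmat n m) :
    let J := Jmat n m
    let P : Matrix (Fin n ⊕ Fin m) (Fin n ⊕ Fin m) ℝ :=
      1 - (s ⬝ᵥ s)⁻¹ • Matrix.vecMulVec s s
    JsymmUpdate n m Bk s y
      = J * P * J * Bk * P + (s ⬝ᵥ s)⁻¹ • Matrix.vecMulVec y s
        + (s ⬝ᵥ s)⁻¹ • (J * Matrix.vecMulVec s y * J * P) :=
  stmt_5_general n m Bk s y hBk
end

section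
/- Let O be any J-symmetric matrix, B_k J-symmetric, M = B_k - O and let B_{k+1} be given by the J-symmetric update with r = y - B_k s. Then M̄ = B_{k+1} - O satisfies M̄ = J P J M P + ((y - O s) s^T)/(s^T s) + (J s (y - O s)^T J)/(s^T s) P, where P = I - s s^T/(s^T s). -/
open Matrix

section Aux
variable {ι : Type*} [Fintype ι]

lemma mulvv (A : Matrix ι ι ℝ) (a b : ι → ℝ) :
    A * Matrix.vecMulVec a b = Matrix.vecMulVec (A *ᵥ a) b := by
  ext i j
  simp [Matrix.mul_apply, Matrix.vecMulVec_apply, Matrix.mulVec, dotProduct,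
    Finset.sum_mul, mul_assoc]

lemma vvmul (A : Matrix ι ι ℝ) (a b : ι → ℝ) :
    Matrix.vecMulVec a b * A = Matrix.vecMulVec a (b ᵥ* A) := by
  ext i j
  simp [Matrix.mul_apply, Matrix.vecMulVec_apply, Matrix.vecMul, dotProduct,
    Finset.mul_sum, mul_assoc]

lemma vvvv (a b c d : ι → ℝ) :
    Matrix.vecMulVec a b * Matrix.vecMulVec c d = (b ⬝ᵥ c) • Matrix.vecMulVec a d := by
  ext i j
  simp only [Matrix.mul_apply, Matrix.vecMulVec_apply, Matrix.smul_apply, dotProduct,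
    smul_eq_mul, Finset.sum_mul]
  exact Finset.sum_congr rfl fun k _ => by ring

omit [Fintype ι] in
lemma vv_sub_left (a b d : ι → ℝ) :
    Matrix.vecMulVec (a - b) d = Matrix.vecMulVec a d - Matrix.vecMulVec b d := by
  ext i j; simp [Matrix.vecMulVec_apply, sub_mul]

omit [Fintype ι] in
lemma vv_sub_right (a b d : ι → ℝ) :
    Matrix.vecMulVec d (a - b) = Matrix.vecMulVec d a - Matrix.vecMulVec d b := by
  ext i j; simp [Matrix.vecMulVec_apply, mul_sub]


lemma vv_mulVec (a b v : ι → ℝ) :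
    Matrix.vecMulVec a b *ᵥ v = (b ⬝ᵥ v) • a := by
  ext i
  simp [Matrix.mulVec, Matrix.vecMulVec_apply, dotProduct, Finset.mul_sum, mul_assoc,
    mul_comm, mul_left_comm]

omit [Fintype ι] in
lemma vv_smul_left (x : ℝ) (a b : ι → ℝ) :
    Matrix.vecMulVec (x • a) b = x • Matrix.vecMulVec a b := by
  ext i j; simp [Matrix.vecMulVec_apply, mul_assoc]

end Aux

/-- For any J-symmetric `O`, with `M = B_k - O` and `M̄ = B_{k+1} - O`,
`M̄ = J P J M P + ((y - O s) sᵀ)/(sᵀs) + (J s (y - O s)ᵀ J)/(sᵀs) P`. -/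
theorem stmt_6 (n m : ℕ)
    (Bk O : Matrix (Fin n ⊕ Fin m) (Fin n ⊕ Fin m) ℝ)
    (s y : (Fin n ⊕ Fin m) → ℝ) (hs : s ≠ 0)
    (hBk : Jmat n m * Bk = Bkᵀ * Jmat n m)
    (hO : Jmat n m * O = Oᵀ * Jmat n m) :
    let J := Jmat n m
    let P : Matrix (Fin n ⊕ Fin m) (Fin n ⊕ Fin m) ℝ :=
      1 - (s ⬝ᵥ s)⁻¹ • Matrix.vecMulVec s s
    JsymmUpdate n m Bk s y - O
      = J * P * J * (Bk - O) * P
        + (s ⬝ᵥ s)⁻¹ • Matrix.vecMulVec (y - O.mulVec s) s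
        + (s ⬝ᵥ s)⁻¹ • (J * Matrix.vecMulVec s (y - O.mulVec s) * J * P) := by
  intro J P
  have hJ : J = Jmat n m := rfl
  have hP : P = 1 - (s ⬝ᵥ s)⁻¹ • Matrix.vecMulVec s s := rfl
  rw [hJ, hP]
  have hc : (s ⬝ᵥ s) ≠ 0 := fun h => hs (dotProduct_self_eq_zero.mp h)
  set A := Jmat n m with hA
  have hJt : Aᵀ = A := by
    simp [hA, Jmat, Matrix.fromBlocks_transpose]
  have hJJ : A * A = 1 := by
    simp [hA, Jmat, Matrix.fromBlocks_multiply]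
  have hvm : ∀ v : (Fin n ⊕ Fin m) → ℝ, v ᵥ* A = A *ᵥ v := by
    intro v; rw [← hJt, Matrix.vecMul_transpose, hJt]
  have hBk' : (A *ᵥ s) ᵥ* Bk = A *ᵥ (Bk *ᵥ s) := by
    rw [← Matrix.mulVec_transpose, Matrix.mulVec_mulVec, ← hJt, ← Matrix.transpose_mul, hBk,
      Matrix.transpose_mul, hJt, Matrix.transpose_transpose, ← Matrix.mulVec_mulVec]
  have hO' : (A *ᵥ s) ᵥ* O = A *ᵥ (O *ᵥ s) := by
    rw [← Matrix.mulVec_transpose, Matrix.mulVec_mulVec, ← hJt, ← Matrix.transpose_mul, hO,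
      Matrix.transpose_mul, hJt, Matrix.transpose_transpose, ← Matrix.mulVec_mulVec]
  have hdot : ∀ v : (Fin n ⊕ Fin m) → ℝ, (A *ᵥ v) ⬝ᵥ s = (A *ᵥ s) ⬝ᵥ v := by
    intro v
    rw [dotProduct_comm, Matrix.dotProduct_mulVec, hvm]
  simp only [JsymmUpdate, ← hA]
  simp only [Matrix.mul_sub, Matrix.sub_mul, Matrix.mul_one, Matrix.one_mul,
    mul_smul_comm, smul_mul_assoc, mulvv, vvmul, vvvv, vv_mulVec, vv_smul_left, hvm, hJJ, hBk', hO',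
    Matrix.mulVec_sub, Matrix.sub_mulVec, vv_sub_left, vv_sub_right, hdot,
    dotProduct_sub, sub_dotProduct, smul_smul, smul_sub, smul_add, mul_sub, sub_mul]
  match_scalars <;> field_simp <;> ring
end

section
/- Consider the quadratic model m(s) = c + g^T s + (1/2) s^T B^T B s with B invertible and g ≠ 0. The global minimizer is p^B = -B^{-1} B^{-T} g, and the function h(α) = m(p^C + α(p^B - p^C)) is nonincreasing on [0,1] for any point p^C of the form p^C = -(||g||²/(g^T B^T B g)) g; in particular m(p^C + α(p^B - p^C)) ≤ m(p^C) for all α ∈ [0,1]. -/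
open Matrix

theorem stmt_16 (d : ℕ) (c : ℝ) (g : Fin d → ℝ) (hg : g ≠ 0)
    (B : Matrix (Fin d) (Fin d) ℝ) (hB : IsUnit B) :
    let mq : (Fin d → ℝ) → ℝ :=
      fun s => c + g ⬝ᵥ s + (1 / 2) * (s ⬝ᵥ (Bᵀ * B).mulVec s)
    let pB : Fin d → ℝ := -((B⁻¹ * (B⁻¹)ᵀ).mulVec g)
    let pC : Fin d → ℝ := -(((g ⬝ᵥ g) / (g ⬝ᵥ (Bᵀ * B).mulVec g)) • g)
    (∀ s : Fin d → ℝ, mq pB ≤ mq s) ∧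
    AntitoneOn (fun α : ℝ => mq (pC + α • (pB - pC))) (Set.Icc 0 1) ∧
    ∀ α ∈ Set.Icc (0 : ℝ) 1, mq (pC + α • (pB - pC)) ≤ mq pC := by
  intro mq pB pC
  set A := Bᵀ * B with hA
  have hB2 : ∀ x y : Fin d → ℝ, x ⬝ᵥ A.mulVec y = (B.mulVec x) ⬝ᵥ (B.mulVec y) := by
    intro x y
    rw [hA, ← Matrix.mulVec_mulVec, Matrix.dotProduct_mulVec, Matrix.vecMul_transpose]
  have hsym : ∀ x y : Fin d → ℝ, x ⬝ᵥ A.mulVec y = y ⬝ᵥ A.mulVec x := by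
    intro x y
    rw [hB2, hB2, dotProduct_comm]
  have hpsd : ∀ x : Fin d → ℝ, 0 ≤ x ⬝ᵥ A.mulVec x := by
    intro x
    rw [hB2, dotProduct]
    exact Finset.sum_nonneg fun i _ => mul_self_nonneg _
  have hkey : A.mulVec pB = -g := by
    show A.mulVec (-((B⁻¹ * (B⁻¹)ᵀ).mulVec g)) = -g
    rw [Matrix.mulVec_neg, Matrix.mulVec_mulVec]
    have h1 : A * (B⁻¹ * (B⁻¹)ᵀ) = 1 := by
      rw [hA, Matrix.transpose_nonsing_inv]
      calc Bᵀ * B * (B⁻¹ * Bᵀ⁻¹) = Bᵀ * (B * B⁻¹) * Bᵀ⁻¹ := by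
            noncomm_ring
        _ = 1 := by
            rw [Matrix.mul_nonsing_inv B ((Matrix.isUnit_iff_isUnit_det B).mp hB),
              Matrix.mul_one, Matrix.mul_nonsing_inv]
            rwa [Matrix.det_transpose, ← Matrix.isUnit_iff_isUnit_det]
    rw [h1, Matrix.one_mulVec]
  -- generic expansion lemma
  have hexp : ∀ x w : Fin d → ℝ,
      mq (x + w) = mq x + (g ⬝ᵥ w + x ⬝ᵥ A.mulVec w) + (1 / 2) * (w ⬝ᵥ A.mulVec w) := by
    intro x w
    show c + g ⬝ᵥ (x + w) + (1 / 2) * ((x + w) ⬝ᵥ A.mulVec (x + w)) = _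
    have h3 : (x + w) ⬝ᵥ A.mulVec (x + w)
        = x ⬝ᵥ A.mulVec x + 2 * (x ⬝ᵥ A.mulVec w) + w ⬝ᵥ A.mulVec w := by
      simp only [Matrix.mulVec_add, add_dotProduct, dotProduct_add, hsym w x]
      ring
    rw [h3, dotProduct_add]
    show _ = c + g ⬝ᵥ x + (1 / 2) * (x ⬝ᵥ A.mulVec x) + _ + _
    ring
  constructor
  · intro s
    have h1 := hexp pB (s - pB)
    have h2 : g ⬝ᵥ (s - pB) + pB ⬝ᵥ A.mulVec (s - pB) = 0 := by
      rw [hsym pB (s - pB), hkey, dotProduct_neg, dotProduct_comm g (s - pB)]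
      ring
    rw [add_sub_cancel] at h1
    rw [h1, h2]
    have := hpsd (s - pB)
    linarith
  · set u := pB - pC with hu
    set a := u ⬝ᵥ A.mulVec u with ha
    have hA0 : 0 ≤ a := hpsd u
    have hb : g ⬝ᵥ u + pC ⬝ᵥ A.mulVec u = -a := by
      have h4 : g ⬝ᵥ u + (pC + u) ⬝ᵥ A.mulVec u = 0 := by
        have hpcu : pC + u = pB := by rw [hu]; abel
        rw [hpcu, hsym pB u, hkey, dotProduct_neg, dotProduct_comm g u]
        ring
      rw [add_dotProduct] at h4
      rw [ha]
      linarith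
    have hq : ∀ t : ℝ, mq (pC + t • u) = mq pC - a * t + a * t ^ 2 / 2 := by
      intro t
      rw [hexp pC (t • u), ha]
      simp only [dotProduct_smul, smul_dotProduct, Matrix.mulVec_smul, smul_eq_mul]
      linear_combination t * hb
    constructor
    · intro α hα β hβ hab
      simp only [hq]
      nlinarith [mul_nonneg hA0 (sub_nonneg.mpr hab), hα.1, hβ.2]
    · intro α hα
      have h0 : mq (pC + (0:ℝ) • u) = mq pC := by
        rw [zero_smul, add_zero]
      rw [hq α]
      nlinarith [mul_nonneg (mul_nonneg hA0 hα.1) (by linarith [hα.2] : (0:ℝ) ≤ 1 - α / 2)]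
end

section
/- (Cauchy point decrease) Let m(s) = c + g^T s + (1/2) s^T B^T B s with g ≠ 0, B invertible with ||B|| ≤ ν, and Δ > 0. Define p^C = -min{||g||²/(g^T B^T B g), Δ/||g||} g. Then m(0) - m(p^C) ≥ (||g||/2) · min{Δ, ||g||/ν²}. -/
open Matrix

/-! Along `-t g` the model decreases by `t ‖g‖² - t² ‖B g‖² / 2`, which is at least
`t ‖g‖² / 2` as long as `t` does not pass the minimiser `‖g‖² / ‖B g‖²` of this parabola.
For the Cauchy step `t = min (‖g‖² / ‖B g‖²) (Δ / ‖g‖)`, the bound `‖B g‖ ≤ ν ‖g‖` gives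
`‖g‖ t ≥ min Δ (‖g‖ / ν²)`. -/

/-- Euclidean norm of a real vector. -/
noncomputable def vNorm {ι : Type*} [Fintype ι] (v : ι → ℝ) : ℝ :=
  Real.sqrt (v ⬝ᵥ v)

/-- Operator (spectral) norm of a real square matrix. -/
noncomputable def opNorm {ι : Type*} [Fintype ι] [DecidableEq ι]
    (M : Matrix ι ι ℝ) : ℝ :=
  ‖Matrix.toEuclideanCLM (𝕜 := ℝ) M‖

section QuadraticModel

variable {ι : Type*} [Fintype ι]

lemma vNorm_eq_norm_toLp (v : ι → ℝ) : vNorm v = ‖WithLp.toLp 2 v‖ := by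
  rw [vNorm, EuclideanSpace.norm_eq]
  congr 1
  simp [dotProduct, sq, Real.norm_eq_abs, abs_mul_abs_self]

lemma vNorm_sq (v : ι → ℝ) : vNorm v ^ 2 = v ⬝ᵥ v :=
  Real.sq_sqrt (by simpa using dotProduct_self_star_nonneg v)

lemma vNorm_pos {v : ι → ℝ} (hv : v ≠ 0) : 0 < vNorm v :=
  Real.sqrt_pos.mpr (by simpa using dotProduct_self_star_pos_iff.mpr hv)

lemma vNorm_mulVec_le [DecidableEq ι] (M : Matrix ι ι ℝ) (v : ι → ℝ) :
    vNorm (M *ᵥ v) ≤ opNorm M * vNorm v := by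
  rw [vNorm_eq_norm_toLp, vNorm_eq_norm_toLp, opNorm, ← toEuclideanCLM_toLp]
  exact ContinuousLinearMap.le_opNorm _ _

lemma dotProduct_transpose_mul_self_mulVec {m : Type*} [Fintype m] (B : Matrix m ι ℝ)
    (v : ι → ℝ) : v ⬝ᵥ (Bᵀ * B) *ᵥ v = (B *ᵥ v) ⬝ᵥ (B *ᵥ v) := by
  rw [← mulVec_mulVec, dotProduct_mulVec, vecMul_transpose]

lemma dotProduct_transpose_mul_self_mulVec_le [DecidableEq ι] {B : Matrix ι ι ℝ} {ν : ℝ}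
    (hν : opNorm B ≤ ν) (v : ι → ℝ) : v ⬝ᵥ (Bᵀ * B) *ᵥ v ≤ ν ^ 2 * vNorm v ^ 2 := by
  rw [dotProduct_transpose_mul_self_mulVec, ← vNorm_sq, ← mul_pow]
  have hBv : vNorm (B *ᵥ v) ≤ ν * vNorm v :=
    (vNorm_mulVec_le B v).trans
      (mul_le_mul_of_nonneg_right hν (Real.sqrt_nonneg _))
  exact pow_le_pow_left₀ (Real.sqrt_nonneg _) hBv 2

lemma dotProduct_transpose_mul_self_mulVec_pos [DecidableEq ι] {B : Matrix ι ι ℝ}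
    (hB : IsUnit B) {v : ι → ℝ} (hv : v ≠ 0) : 0 < v ⬝ᵥ (Bᵀ * B) *ᵥ v := by
  have hBv : B *ᵥ v ≠ 0 := fun h =>
    hv (mulVec_injective_iff_isUnit.mpr hB (h.trans (mulVec_zero B).symm))
  simpa [dotProduct_transpose_mul_self_mulVec] using dotProduct_self_star_pos_iff.mpr hBv

noncomputable def quadModel (c : ℝ) (g : ι → ℝ) (H : Matrix ι ι ℝ) (s : ι → ℝ) : ℝ :=
  c + g ⬝ᵥ s + (1 / 2) * (s ⬝ᵥ H *ᵥ s)

lemma quadModel_zero_sub_neg_smul (c t : ℝ) (g : ι → ℝ) (H : Matrix ι ι ℝ) :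
    quadModel c g H 0 - quadModel c g H (-(t • g)) =
      t * (g ⬝ᵥ g) - t ^ 2 * (g ⬝ᵥ H *ᵥ g) / 2 := by
  simp only [quadModel, dotProduct_zero, mulVec_zero, mulVec_neg, mulVec_smul, dotProduct_neg,
    neg_dotProduct, dotProduct_smul, smul_dotProduct, smul_eq_mul]
  ring

end QuadraticModel

lemma half_mul_le_sub_of_le_div {a b t : ℝ} (hb : 0 < b) (ht : 0 ≤ t) (hta : t ≤ a / b) :
    t * a / 2 ≤ t * a - t ^ 2 * b / 2 := by
  have : t * b ≤ a := (le_div_iff₀ hb).mp hta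
  nlinarith

/-- Cauchy point decrease. -/
theorem stmt_17 (d : ℕ) (c Δ ν : ℝ) (hΔ : 0 < Δ) (g : Fin d → ℝ) (hg : g ≠ 0)
    (B : Matrix (Fin d) (Fin d) ℝ) (hB : IsUnit B) (hν : opNorm B ≤ ν) :
    let mq : (Fin d → ℝ) → ℝ :=
      fun s => c + g ⬝ᵥ s + (1 / 2) * (s ⬝ᵥ (Bᵀ * B).mulVec s)
    let pC : Fin d → ℝ :=
      -((min ((g ⬝ᵥ g) / (g ⬝ᵥ (Bᵀ * B).mulVec g)) (Δ / vNorm g)) • g)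
    mq 0 - mq pC ≥ (vNorm g / 2) * min Δ (vNorm g / ν ^ 2) := by
  intro mq pC
  set n := vNorm g
  set b := g ⬝ᵥ (Bᵀ * B) *ᵥ g
  set t := min ((g ⬝ᵥ g) / b) (Δ / n)
  have hn : 0 < n := vNorm_pos hg
  have hb : 0 < b := dotProduct_transpose_mul_self_mulVec_pos hB hg
  have hbν : b ≤ ν ^ 2 * n ^ 2 := dotProduct_transpose_mul_self_mulVec_le hν g
  have hν2 : 0 < ν ^ 2 := by nlinarith
  have ht : 0 ≤ t := le_min (by rw [← vNorm_sq]; positivity) (by positivity)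
  have hmin_le : min Δ (n / ν ^ 2) ≤ n * t := by
    rw [mul_min_of_nonneg _ _ hn.le, mul_div_cancel₀ _ hn.ne', min_comm]
    refine min_le_min_right _ ?_
    rw [← vNorm_sq, mul_div_assoc', div_le_div_iff₀ hν2 hb]
    nlinarith
  calc n / 2 * min Δ (n / ν ^ 2) ≤ n / 2 * (n * t) := by gcongr
    _ = t * (g ⬝ᵥ g) / 2 := by rw [← vNorm_sq]; ring
    _ ≤ t * (g ⬝ᵥ g) - t ^ 2 * b / 2 := half_mul_le_sub_of_le_div hb ht (min_le_left _ _)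
    _ = mq 0 - mq pC := (quadModel_zero_sub_neg_smul c t g (Bᵀ * B)).symm
end
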